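/- arXiv:1706.00219 — 2 statements merged into one kernel-verified Lean document; each statement's English description precedes it below -/
import Mathlib

section
/- There exists a universal constant c > 0 such that for every instance (every number n ≥ 2 of demand levels and every values and demands as above) there exists a non-trivial pure Nash equilibrium (p,q) whose revenue is at least a c/√D fraction of the optimal social welfare: √D · R(p+q) ≥ c · SW(0), where D = d_n/d_1. -/
open scoped Classical

/-- The demand function induced by an instance with `n` demand levels,
values `v` and demands `d` (indices `1,…,n`):
`demand n v d x = d i` for the largest index `i ∈ {1,…,n}` with `x ≤ v i`,
and `0` if there is no such index. -/
noncomputable def demand (n : ℕ) (v d : ℕ → ℝ) (x : ℝ) : ℝ :=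
  if h : ((Finset.Icc 1 n).filter (fun i => x ≤ v i)).Nonempty then
    d (((Finset.Icc 1 n).filter (fun i => x ≤ v i)).max' h)
  else 0

/-- Total revenue at total price `x`. -/
noncomputable def rev (n : ℕ) (v d : ℕ → ℝ) (x : ℝ) : ℝ := x * demand n v d x

/-- Social welfare at total price `x` (with the convention `d 0 = 0`). -/
noncomputable def welfare (n : ℕ) (v d : ℕ → ℝ) (x : ℝ) : ℝ :=
  ∑ i ∈ (Finset.Icc 1 n).filter (fun i => x ≤ v i),
    v i * (d i - if 1 < i then d (i - 1) else 0)

/-- `InBR n v d q p` : `p` is a best response to the price `q` of the other seller. -/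
def InBR (n : ℕ) (v d : ℕ → ℝ) (q p : ℝ) : Prop :=
  0 ≤ p ∧ ∀ p', 0 ≤ p' → p' * demand n v d (p' + q) ≤ p * demand n v d (p + q)

/-- `(p, q)` is a pure Nash equilibrium. -/
def IsNE (n : ℕ) (v d : ℕ → ℝ) (p q : ℝ) : Prop :=
  0 ≤ p ∧ 0 ≤ q ∧ InBR n v d q p ∧ InBR n v d p q

/-- A valid instance with `n ≥ 2` demand levels: positive values strictly
decreasing in the index, positive demands strictly increasing in the index. -/
def ValidInstance (n : ℕ) (v d : ℕ → ℝ) : Prop :=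
  2 ≤ n ∧ 0 < v n ∧ (∀ i j, 1 ≤ i → i < j → j ≤ n → v j < v i) ∧
    0 < d 1 ∧ (∀ i j, 1 ≤ i → i < j → j ≤ n → d i < d j)

/-!
Let `k` maximise `v k * √(d k)` and let both sellers charge `v k / 2`. A deviation to `p'` that
sells `d j` needs `p' + v k / 2 ≤ v j`, and the maximality of `k` together with AM-GM shows that
`(v j - v k / 2) * d j ≤ v k / 2 * d k`, so this is an equilibrium with total price `v k ≤ v 1`.
For the welfare, `d i - d (i - 1) ≤ 2 √(d i) (√(d i) - √(d (i - 1)))`, so each welfare term is at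
most `2 v k √(d k) (√(d i) - √(d (i - 1)))`; telescoping gives `SW(0) ≤ 2 v k √(d k) √(d n)`,
and `√(d n) ≤ √D √(d k)` turns this into `SW(0) ≤ 2 √D R(v k)`.
-/

open Finset

section Demand

variable {n : ℕ} {v d : ℕ → ℝ} {x : ℝ}

theorem demand_eq_of_forall_le {k : ℕ} (hk : k ∈ Icc 1 n) (hx : x ≤ v k)
    (hmax : ∀ i ∈ Icc 1 n, x ≤ v i → i ≤ k) : demand n v d x = d k := by
  have hmem : k ∈ (Icc 1 n).filter (fun i => x ≤ v i) := mem_filter.2 ⟨hk, hx⟩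
  rw [demand, dif_pos ⟨k, hmem⟩]
  congr 1
  refine le_antisymm (max'_le _ _ _ fun i hi => ?_) (le_max' _ _ hmem)
  exact hmax i (mem_filter.1 hi).1 (mem_filter.1 hi).2

theorem demand_eq_zero_or_exists (n : ℕ) (v d : ℕ → ℝ) (x : ℝ) :
    demand n v d x = 0 ∨ ∃ j ∈ Icc 1 n, x ≤ v j ∧ demand n v d x = d j := by
  rw [demand]
  split_ifs with h
  · obtain ⟨hj, hxj⟩ := mem_filter.1 (max'_mem _ h)
    exact Or.inr ⟨_, hj, hxj, rfl⟩
  · exact Or.inl rfl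

end Demand

theorem sub_half_mul_le_half_mul {a b e f : ℝ} (hb : 0 < b) (he : 0 ≤ e)
    (h : a ^ 2 * e ≤ b ^ 2 * f) : (a - b / 2) * e ≤ b / 2 * f := by
  have hamgm : 2 * a * b * e ≤ a ^ 2 * e + b ^ 2 * e := by
    nlinarith [mul_nonneg he (sq_nonneg (a - b))]
  nlinarith

theorem mul_sub_le_two_mul_sqrt_sub_sqrt {w a b M : ℝ} (hw : 0 ≤ w) (ha : 0 ≤ a) (hab : a ≤ b)
    (hM : w * √b ≤ M) : w * (b - a) ≤ 2 * M * (√b - √a) := by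
  have hsqrt : b - a ≤ 2 * √b * (√b - √a) := by
    nlinarith [sq_nonneg (√b - √a), Real.sq_sqrt ha, Real.sq_sqrt (ha.trans hab)]
  calc w * (b - a) ≤ w * (2 * √b * (√b - √a)) := mul_le_mul_of_nonneg_left hsqrt hw
    _ = 2 * (w * √b) * (√b - √a) := by ring
    _ ≤ 2 * M * (√b - √a) := by
        gcongr
        exact sub_nonneg.2 (Real.sqrt_le_sqrt hab)

theorem Real.sqrt_le_sqrt_div_mul_sqrt {a b : ℝ} (c : ℝ) (ha : 0 < a) (hab : a ≤ b) :
    √c ≤ √(c / a) * √b :=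
  calc √c = √(c / a) * √a := by rw [← Real.sqrt_mul' _ ha.le, div_mul_cancel₀ _ ha.ne']
    _ ≤ √(c / a) * √b := by gcongr

theorem sum_Icc_one_sub_ite_pred (f : ℕ → ℝ) {n : ℕ} (hn : 1 ≤ n) :
    ∑ i ∈ Icc 1 n, (f i - if 1 < i then f (i - 1) else 0) = f n := by
  induction n, hn using Nat.le_induction with
  | base => simp
  | succ m hm ih =>
    rw [sum_Icc_succ_top (by omega), ih, if_pos (by omega), Nat.add_sub_cancel]
    ring

namespace ValidInstance

variable {n : ℕ} {v d : ℕ → ℝ} {i : ℕ}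

theorem mem_Icc_self (hV : ValidInstance n v d) : n ∈ Icc 1 n :=
  mem_Icc.2 ⟨by linarith [hV.1], le_rfl⟩

theorem v_pos (hV : ValidInstance n v d) (hi : i ∈ Icc 1 n) : 0 < v i := by
  obtain ⟨hi1, hin⟩ := mem_Icc.1 hi
  rcases hin.eq_or_lt with rfl | hlt
  · exact hV.2.1
  · exact hV.2.1.trans (hV.2.2.1 i n hi1 hlt le_rfl)

theorem d_one_le (hV : ValidInstance n v d) (hi : i ∈ Icc 1 n) : d 1 ≤ d i := by
  obtain ⟨hi1, hin⟩ := mem_Icc.1 hi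
  rcases hi1.eq_or_lt with rfl | hlt
  · exact le_rfl
  · exact (hV.2.2.2.2 1 i le_rfl hlt hin).le

theorem d_pos (hV : ValidInstance n v d) (hi : i ∈ Icc 1 n) : 0 < d i :=
  hV.2.2.2.1.trans_le (hV.d_one_le hi)

theorem v_le_v_one (hV : ValidInstance n v d) (hi : i ∈ Icc 1 n) : v i ≤ v 1 := by
  obtain ⟨hi1, hin⟩ := mem_Icc.1 hi
  rcases hi1.eq_or_lt with rfl | hlt
  · exact le_rfl
  · exact (hV.2.2.1 1 i le_rfl hlt hin).le

theorem demand_v (hV : ValidInstance n v d) (hi : i ∈ Icc 1 n) : demand n v d (v i) = d i := by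
  refine demand_eq_of_forall_le hi le_rfl fun j hj hvj => ?_
  by_contra! hlt
  exact (hV.2.2.1 i j (mem_Icc.1 hi).1 hlt (mem_Icc.1 hj).2).not_ge hvj

theorem welfare_zero (hV : ValidInstance n v d) :
    welfare n v d 0 = ∑ i ∈ Icc 1 n, v i * (d i - if 1 < i then d (i - 1) else 0) := by
  rw [welfare, filter_true_of_mem fun i hi => (hV.v_pos hi).le]

theorem inBR_half (hV : ValidInstance n v d) {k : ℕ}
    (hk : k ∈ Icc 1 n) (hmax : ∀ j ∈ Icc 1 n, v j * √(d j) ≤ v k * √(d k)) :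
    InBR n v d (v k / 2) (v k / 2) := by
  have hvk := hV.v_pos hk
  refine ⟨by positivity, fun p' hp' => ?_⟩
  rw [add_halves, hV.demand_v hk]
  rcases demand_eq_zero_or_exists n v d (p' + v k / 2) with h | ⟨j, hj, hxj, h⟩
  · rw [h, mul_zero]
    exact mul_nonneg (by positivity) (hV.d_pos hk).le
  · have hsq : v j ^ 2 * d j ≤ v k ^ 2 * d k := by
      have := pow_le_pow_left₀ (mul_nonneg (hV.v_pos hj).le (Real.sqrt_nonneg _)) (hmax j hj) 2
      rwa [mul_pow, mul_pow, Real.sq_sqrt (hV.d_pos hj).le, Real.sq_sqrt (hV.d_pos hk).le] at this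
    rw [h]
    calc p' * d j ≤ (v j - v k / 2) * d j := by gcongr; exacts [(hV.d_pos hj).le, by linarith]
      _ ≤ v k / 2 * d k := sub_half_mul_le_half_mul hvk (hV.d_pos hj).le hsq

theorem welfare_zero_le (hV : ValidInstance n v d) {M : ℝ}
    (hM : ∀ i ∈ Icc 1 n, v i * √(d i) ≤ M) : welfare n v d 0 ≤ 2 * M * √(d n) := by
  have hprev : ∀ i ∈ Icc 1 n, 0 ≤ (if 1 < i then d (i - 1) else 0) ∧
      (if 1 < i then d (i - 1) else 0) ≤ d i := by
    intro i hi
    split_ifs with h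
    · have hi' : i - 1 ∈ Icc 1 n := mem_Icc.2 ⟨by omega, by have := (mem_Icc.1 hi).2; omega⟩
      exact ⟨(hV.d_pos hi').le, (hV.2.2.2.2 _ i (by omega) (by omega) (mem_Icc.1 hi).2).le⟩
    · exact ⟨le_rfl, (hV.d_pos hi).le⟩
  have hterm : ∀ i ∈ Icc 1 n, v i * (d i - if 1 < i then d (i - 1) else 0) ≤
      2 * M * (√(d i) - if 1 < i then √(d (i - 1)) else 0) := by
    intro i hi
    have hsqrt : (if 1 < i then √(d (i - 1)) else 0) = √(if 1 < i then d (i - 1) else 0) := by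
      split_ifs <;> simp
    rw [hsqrt]
    exact mul_sub_le_two_mul_sqrt_sub_sqrt (hV.v_pos hi).le (hprev i hi).1 (hprev i hi).2 (hM i hi)
  rw [hV.welfare_zero, ← sum_Icc_one_sub_ite_pred (fun i => √(d i))
    (mem_Icc.1 hV.mem_Icc_self).1, mul_sum]
  exact sum_le_sum hterm

end ValidInstance

/-- There is a universal constant `c > 0` such that every instance has a
non-trivial pure Nash equilibrium whose revenue is at least a `c/√D` fraction
of the optimal social welfare. -/
theorem stmt_16 :
    ∃ c : ℝ, 0 < c ∧
      ∀ (n : ℕ) (v d : ℕ → ℝ), ValidInstance n v d →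
        ∃ p q : ℝ, IsNE n v d p q ∧ p + q ≤ v 1 ∧
          c * welfare n v d 0 ≤ Real.sqrt (d n / d 1) * rev n v d (p + q) := by
  refine ⟨1 / 2, by norm_num, fun n v d hV => ?_⟩
  obtain ⟨k, hk, hmax⟩ := exists_max_image (Icc 1 n) (fun i => v i * √(d i)) ⟨n, hV.mem_Icc_self⟩
  have hBR := hV.inBR_half hk hmax
  refine ⟨v k / 2, v k / 2, ⟨hBR.1, hBR.1, hBR, hBR⟩, by rw [add_halves]; exact hV.v_le_v_one hk, ?_⟩
  rw [add_halves, rev, hV.demand_v hk]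
  calc 1 / 2 * welfare n v d 0 ≤ v k * √(d k) * √(d n) := by linarith [hV.welfare_zero_le hmax]
    _ ≤ v k * √(d k) * (√(d n / d 1) * √(d k)) := by
        gcongr
        · exact mul_nonneg (hV.v_pos hk).le (Real.sqrt_nonneg _)
        · exact Real.sqrt_le_sqrt_div_mul_sqrt _ hV.2.2.2.1 (hV.d_one_le hk)
    _ = √(d n / d 1) * (v k * d k) := by
        linear_combination (v k * √(d n / d 1)) * Real.mul_self_sqrt (hV.d_pos hk).le
end

section
/- Fix an integer D ≥ 3 and consider the instance with n = D demand levels given by v_1 = 1.001, v_i = 1/√(i−1) for i = 2, …, n, and d_i = i for i = 1, …, n (so the total demand is d_n/d_1 = D). Then: every non-trivial pure Nash equilibrium (p,q) has total price p+q ∈ {v_1, v_2, v_3}, hence R(p+q) ≤ 3/√2 and SW(p+q) ≤ v_1 + v_2 + v_3 < 3; the optimal welfare satisfies SW(0) ≥ √D; and the monopolist revenue satisfies R(v_n) = D/√(D−1), so sup_{x≥0} R(x) ≥ D/√(D−1). In particular the optimal welfare and the monopolist revenue are at least a factor Ω(√D) larger than the welfare and revenue of any (hence of the best) equilibrium. 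-/
open scoped Classical

/-!
At a non-trivial equilibrium the total price is a value `v k`: otherwise either seller could
raise its price up to `v k` without losing demand. Both sellers could also undercut to the
next value `v (k - 1)`; adding the two no-deviation inequalities gives
`(2 v (k-1) - v k) d (k-1) ≤ v k d k`. With `v i = 1/√(i-1)` and `d i = i` this fails for every
`k ≥ 3`, so only `v 1` and `v 2` remain. The optimal welfare is `∑ v i`, and
`√(m+1) ≤ √m + 1/√m` makes it grow at least like `√D`.
-/

open Finset

section Demand

variable {n : ℕ} {v d : ℕ → ℝ}

lemma filter_le_value_eq_Icc (hv : StrictAntiOn v (Set.Icc 1 n)) {j : ℕ} (hj : j ∈ Icc 1 n) :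
    (Icc 1 n).filter (fun i => v j ≤ v i) = Icc 1 j := by
  rw [mem_Icc] at hj
  ext i
  simp only [mem_filter, mem_Icc]
  constructor
  · rintro ⟨hi, hle⟩
    exact ⟨hi.1, (hv.le_iff_ge hj hi).1 hle⟩
  · rintro ⟨hi1, hij⟩
    exact ⟨⟨hi1, hij.trans hj.2⟩, (hv.le_iff_ge hj ⟨hi1, hij.trans hj.2⟩).2 hij⟩

lemma demand_value (hv : StrictAntiOn v (Set.Icc 1 n)) (d : ℕ → ℝ) {j : ℕ}
    (hj : j ∈ Icc 1 n) : demand n v d (v j) = d j := by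
  have hne : ((Icc 1 n).filter (fun i => v j ≤ v i)).Nonempty :=
    ⟨j, mem_filter.2 ⟨hj, le_rfl⟩⟩
  rw [demand, dif_pos hne]
  congr 1
  rw [max'_eq_iff, filter_le_value_eq_Icc hv hj]
  exact ⟨right_mem_Icc.2 (mem_Icc.1 hj).1, fun i hi => (mem_Icc.1 hi).2⟩

lemma exists_demand_eq (hn : 1 ≤ n) {x : ℝ} (hx : x ≤ v 1) :
    ∃ k ∈ Icc 1 n, x ≤ v k ∧ demand n v d x = d k := by
  have hne : ((Icc 1 n).filter (fun i => x ≤ v i)).Nonempty :=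
    ⟨1, mem_filter.2 ⟨left_mem_Icc.2 hn, hx⟩⟩
  obtain ⟨hk, hxk⟩ := mem_filter.1 (max'_mem _ hne)
  exact ⟨_, hk, hxk, by rw [demand, dif_pos hne]⟩

lemma welfare_eq_sum_of_eq_self (hd : ∀ i : ℕ, 1 ≤ i → i ≤ n → d i = (i : ℝ)) (x : ℝ) :
    welfare n v d x = ∑ i ∈ (Icc 1 n).filter (fun i => x ≤ v i), v i := by
  refine sum_congr rfl fun i hi => ?_
  obtain ⟨hi1, hin⟩ := mem_Icc.1 (mem_filter.1 hi).1
  split_ifs with h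
  · rw [hd i hi1 hin, hd (i - 1) (by omega) (by omega), Nat.cast_sub hi1]
    ring
  · rw [hd i hi1 hin, show i = 1 by omega]
    simp

lemma InBR.sub_mul_le (hv : StrictAntiOn v (Set.Icc 1 n)) {p q : ℝ} (h : InBR n v d q p)
    {j : ℕ} (hj : j ∈ Icc 1 n) (hqj : q ≤ v j) :
    (v j - q) * d j ≤ p * demand n v d (p + q) := by
  simpa [demand_value hv d hj] using h.2 (v j - q) (sub_nonneg.2 hqj)

lemma InBR.exists_add_eq_value (hv : StrictAntiOn v (Set.Icc 1 n))
    (hd : ∀ i ∈ Icc 1 n, 0 < d i) (hn : 1 ≤ n) {p q : ℝ} (h : InBR n v d q p)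
    (hpq : p + q ≤ v 1) : ∃ k ∈ Icc 1 n, p + q = v k ∧ demand n v d (p + q) = d k := by
  obtain ⟨k, hk, hle, hdem⟩ := exists_demand_eq (d := d) hn hpq
  refine ⟨k, hk, le_antisymm hle (not_lt.1 fun hlt => ?_), hdem⟩
  have := h.sub_mul_le hv hk (by linarith [h.1])
  rw [hdem] at this
  nlinarith [hd k hk]

lemma IsNE.two_mul_sub_mul_le_rev (hv : StrictAntiOn v (Set.Icc 1 n)) {p q : ℝ}
    (h : IsNE n v d p q) {j : ℕ} (hj : j ∈ Icc 1 n) (hpq : p + q ≤ v j) :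
    (2 * v j - (p + q)) * d j ≤ rev n v d (p + q) := by
  obtain ⟨hp, hq, hbrp, hbrq⟩ := h
  have hp' := hbrp.sub_mul_le hv hj (by linarith)
  have hq' := hbrq.sub_mul_le hv hj (by linarith)
  rw [add_comm q p] at hq'
  rw [rev]
  linarith

end Demand

lemma sqrt_add_one_le_add_inv_sqrt {x : ℝ} (hx : 0 < x) : √(x + 1) ≤ √x + 1 / √x := by
  have hs : 0 < √x := Real.sqrt_pos.2 hx
  rw [Real.sqrt_le_left (by positivity), add_sq, Real.sq_sqrt hx.le, mul_assoc,
    mul_one_div_cancel hs.ne']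
  nlinarith [sq_nonneg (1 / √x)]

/-- The undercutting condition fails at level `k = t + 2` of the instance. -/
lemma inv_sqrt_mul_lt (t : ℝ) (ht : 0 < t) :
    1 / √(t + 1) * (t + 2) < (2 * (1 / √t) - 1 / √(t + 1)) * (t + 1) := by
  set a := √t
  set b := √(t + 1)
  have ha : 0 < a := Real.sqrt_pos.2 ht
  have hb : 0 < b := Real.sqrt_pos.2 (by linarith)
  have ha2 : a ^ 2 = t := Real.sq_sqrt ht.le
  have hb2 : b ^ 2 = t + 1 := Real.sq_sqrt (by linarith)
  -- squared, this is `(b² - 1)(2b² + 1)² < 4b⁶`, i.e. `0 < 3b² + 1`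
  have key : a * (2 * b ^ 2 + 1) < 2 * b ^ 3 :=
    lt_of_pow_lt_pow_left₀ 2 (by positivity) (by nlinarith)
  have hdiff : (2 * (1 / a) - 1 / b) * (t + 1) - 1 / b * (t + 2)
      = (2 * b ^ 3 - a * (2 * b ^ 2 + 1)) / (a * b) := by
    rw [show t + 2 = b ^ 2 + 1 by linarith, ← hb2]
    field_simp
    ring
  rw [← sub_pos, hdiff]
  exact div_pos (by linarith) (by positivity)

section Instance

variable {D : ℕ} {v d : ℕ → ℝ} (hv1 : v 1 = 1.001)
  (hv : ∀ i : ℕ, 2 ≤ i → i ≤ D → v i = 1 / Real.sqrt ((i : ℝ) - 1))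
  (hd : ∀ i : ℕ, 1 ≤ i → i ≤ D → d i = (i : ℝ))

include hv1 hv

lemma v_pos {i : ℕ} (hi : i ∈ Icc 1 D) : 0 < v i := by
  obtain ⟨hi1, hiD⟩ := mem_Icc.1 hi
  rcases hi1.eq_or_lt with rfl | hi2
  · rw [hv1]
    norm_num
  · have hi : (2 : ℝ) ≤ i := by exact_mod_cast hi2
    rw [hv i hi2 hiD]
    exact one_div_pos.2 (Real.sqrt_pos.2 (by linarith))

lemma strictAntiOn_v : StrictAntiOn v (Set.Icc 1 D) := by
  rintro i ⟨hi1, hiD⟩ j ⟨hj1, hjD⟩ hij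
  have hj : (2 : ℝ) ≤ j := by exact_mod_cast (by omega : 2 ≤ j)
  rw [hv j (by omega) hjD]
  rcases hi1.eq_or_lt with rfl | hi2
  · rw [hv1]
    calc 1 / √((j : ℝ) - 1) ≤ 1 :=
          div_le_one_of_le₀ (Real.one_le_sqrt.2 (by linarith)) (Real.sqrt_nonneg _)
      _ < 1.001 := by norm_num
  · have hi : (2 : ℝ) ≤ i := by exact_mod_cast hi2
    have hij' : (i : ℝ) < j := by exact_mod_cast hij
    rw [hv i hi2 hiD]
    exact one_div_lt_one_div_of_lt (Real.sqrt_pos.2 (by linarith))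
      (Real.sqrt_lt_sqrt (by linarith) (by linarith))

lemma sqrt_le_sum_v {m : ℕ} (hm : 1 ≤ m) (hmD : m ≤ D) : √(m : ℝ) ≤ ∑ i ∈ Icc 1 m, v i := by
  induction m, hm using Nat.le_induction with
  | base =>
    rw [Icc_self, sum_singleton, hv1]
    norm_num
  | succ m hm ih =>
    have hm' : (0 : ℝ) < m := by exact_mod_cast hm
    rw [sum_Icc_succ_top (by omega), hv (m + 1) (by omega) hmD]
    push_cast
    rw [add_sub_cancel_right]
    linarith [ih (by omega), sqrt_add_one_le_add_inv_sqrt hm']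

include hd in
lemma IsNE.add_eq_v_one_or_v_two (hD : 1 ≤ D) {p q : ℝ} (h : IsNE D v d p q)
    (hpq : p + q ≤ v 1) : p + q = v 1 ∨ p + q = v 2 := by
  have hanti := strictAntiOn_v hv1 hv
  have hdpos : ∀ i ∈ Icc 1 D, 0 < d i := fun i hi => by
    obtain ⟨hi1, hiD⟩ := mem_Icc.1 hi
    rw [hd i hi1 hiD]
    exact_mod_cast hi1
  obtain ⟨k, hk, hx, hdem⟩ := h.2.2.1.exists_add_eq_value hanti hdpos hD hpq
  obtain ⟨hk1, hkD⟩ := mem_Icc.1 hk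
  suffices k ≤ 2 by interval_cases k <;> simp [hx]
  by_contra! hk3
  obtain ⟨m, rfl⟩ : ∃ m, k = m + 3 := ⟨k - 3, by omega⟩
  have hj : m + 2 ∈ Icc 1 D := mem_Icc.2 ⟨by omega, by omega⟩
  have hundercut := h.two_mul_sub_mul_le_rev hanti hj
    (hx ▸ (hanti (mem_Icc.1 hj) (mem_Icc.1 hk) (by omega)).le)
  rw [rev, hdem, hx, hv (m + 2) (by omega) (by omega), hv (m + 3) (by omega) hkD,
    hd (m + 2) (by omega) (by omega), hd (m + 3) (by omega) hkD] at hundercut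
  have hfail := inv_sqrt_mul_lt ((m : ℝ) + 1) (by positivity)
  push_cast at hundercut
  ring_nf at hundercut hfail
  linarith

end Instance

/-- In the instance with `n = D` levels, `v₁ = 1.001`, `vᵢ = 1/√(i-1)` and
`dᵢ = i`: every non-trivial equilibrium has total price `v₁`, `v₂` or `v₃`,
hence revenue at most `3/√2` and welfare at most `v₁ + v₂ + v₃ < 3`, while
the optimal welfare is at least `√D` and the monopolist revenue is at least
`R(v_D) = D/√(D-1)`. -/
theorem stmt_19 (D : ℕ) (hD : 3 ≤ D) (v d : ℕ → ℝ)
    (hv1 : v 1 = 1.001)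
    (hv : ∀ i : ℕ, 2 ≤ i → i ≤ D → v i = 1 / Real.sqrt ((i : ℝ) - 1))
    (hd : ∀ i : ℕ, 1 ≤ i → i ≤ D → d i = (i : ℝ)) :
    (∀ p q : ℝ, IsNE D v d p q → p + q ≤ v 1 →
      (p + q = v 1 ∨ p + q = v 2 ∨ p + q = v 3) ∧
      rev D v d (p + q) ≤ 3 / Real.sqrt 2 ∧
      welfare D v d (p + q) ≤ v 1 + v 2 + v 3 ∧ v 1 + v 2 + v 3 < 3) ∧
    Real.sqrt (D : ℝ) ≤ welfare D v d 0 ∧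
    rev D v d (v D) = (D : ℝ) / Real.sqrt ((D : ℝ) - 1) := by
  have hanti := strictAntiOn_v hv1 hv
  have mem_Icc_of : ∀ i, 1 ≤ i → i ≤ D → i ∈ Icc 1 D := fun i h1 h2 => mem_Icc.2 ⟨h1, h2⟩
  have hv2 : v 2 = 1 := by
    rw [hv 2 le_rfl (by omega)]
    norm_num
  have hv3 : v 3 = 1 / √2 := by
    rw [hv 3 (by norm_num) hD]
    norm_num
  have hv3_pos : 0 < v 3 := v_pos hv1 hv (mem_Icc_of 3 (by norm_num) hD)
  have htwo_le : (2 : ℝ) ≤ 3 / √2 := by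
    rw [le_div_iff₀ (by positivity)]
    linarith [Real.sqrt_two_lt_three_halves]
  have hsum : v 1 + v 2 + v 3 < 3 := by
    have h14 : (1.4 : ℝ) < √2 := by
      rw [Real.lt_sqrt (by norm_num)]
      norm_num
    have := one_div_lt_one_div_of_lt (by norm_num) h14
    rw [hv1, hv2, hv3]
    norm_num at this ⊢
    linarith
  refine ⟨fun p q hne hpq => ?_, ?_, ?_⟩
  · rcases hne.add_eq_v_one_or_v_two hv1 hv hd (by omega) hpq with h | h
    · rw [h, rev, demand_value hanti d (mem_Icc_of 1 le_rfl (by omega)),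
        welfare_eq_sum_of_eq_self hd, filter_le_value_eq_Icc hanti (mem_Icc_of 1 le_rfl (by omega)),
        hd 1 le_rfl (by omega), Icc_self, sum_singleton]
      refine ⟨Or.inl rfl, ?_, by linarith, hsum⟩
      rw [hv1]
      linarith
    · rw [h, rev, demand_value hanti d (mem_Icc_of 2 (by norm_num) (by omega)),
        welfare_eq_sum_of_eq_self hd,
        filter_le_value_eq_Icc hanti (mem_Icc_of 2 (by norm_num) (by omega)),
        hd 2 (by norm_num) (by omega), sum_Icc_succ_top (by norm_num), Icc_self, sum_singleton]
      refine ⟨Or.inr (Or.inl rfl), ?_, by linarith, hsum⟩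
      rw [hv2]
      linarith
  · rw [welfare_eq_sum_of_eq_self hd, filter_true_of_mem fun i hi => (v_pos hv1 hv hi).le]
    exact sqrt_le_sum_v hv1 hv (by omega) le_rfl
  · rw [rev, demand_value hanti d (mem_Icc_of D (by omega) le_rfl), hd D (by omega) le_rfl,
      hv D (by omega) le_rfl]
    ring
end
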